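/- Let p > 2 and let g : (0,1) → (0,1) be the function implicitly defined by g(t)^{p−2}(1 − g(t)²) = t^{p−2}(1 − t²) together with g(t) ≠ t for t ≠ √((p−2)/p) and g(√((p−2)/p)) = √((p−2)/p) (this determines g uniquely). Then g is strictly decreasing on (0,1), g(t) → 1 as t → 0⁺, and g(t) → 0 as t → 1⁻. -/

import Mathlib

/-!
The profile `f t = t ^ (p - 2) * (1 - t ^ 2)` has derivative `t ^ (p - 3) * ((p - 2) - p t²)`, so it
increases on `(0, m]` and decreases on `[m, 1)` with `m = √((p - 2) / p)`. Since `f` is injective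
on each side of `m`, any `g` with `f ∘ g = f` and no fixed point other than `m` must fix `m`, send
every other point to the opposite side, and be a strictly decreasing involution of `(0, 1)`. A
strictly decreasing bijection of `(0, 1)` onto itself swaps the ends of the interval.
-/

open Set Filter Topology

section Companion

variable {α β : Type*} [LinearOrder α] [LinearOrder β] {f : α → β} {g : α → α} {a b m : α}

theorem companion_peak_eq (hinc : StrictMonoOn f (Ioc a m)) (hdec : StrictAntiOn f (Ico m b))
    (hmaps : MapsTo g (Ioo a b) (Ioo a b)) (hfg : ∀ t ∈ Ioo a b, f (g t) = f t)
    (hm : m ∈ Ioo a b) : g m = m := by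
  have hgm := hmaps hm
  rcases lt_trichotomy (g m) m with hlt | heq | hgt
  · exact absurd (hfg m hm) (hinc ⟨hgm.1, hlt.le⟩ ⟨hm.1, le_rfl⟩ hlt).ne
  · exact heq
  · exact absurd (hfg m hm) (hdec ⟨le_rfl, hm.2⟩ ⟨hgt.le, hgm.2⟩ hgt).ne

theorem peak_lt_companion (hinc : StrictMonoOn f (Ioc a m))
    (hmaps : MapsTo g (Ioo a b) (Ioo a b)) (hfg : ∀ t ∈ Ioo a b, f (g t) = f t)
    (hne : ∀ t ∈ Ioo a b, t ≠ m → g t ≠ t) {t : α} (ht : t ∈ Ioo a b) (htm : t < m) :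
    m < g t := by
  by_contra! hgt
  exact hne t ht htm.ne (hinc.injOn ⟨(hmaps ht).1, hgt⟩ ⟨ht.1, htm.le⟩ (hfg t ht))

theorem companion_lt_peak (hdec : StrictAntiOn f (Ico m b))
    (hmaps : MapsTo g (Ioo a b) (Ioo a b)) (hfg : ∀ t ∈ Ioo a b, f (g t) = f t)
    (hne : ∀ t ∈ Ioo a b, t ≠ m → g t ≠ t) {t : α} (ht : t ∈ Ioo a b) (hmt : m < t) :
    g t < m := by
  by_contra! hgt
  exact hne t ht hmt.ne' (hdec.injOn ⟨hgt, (hmaps ht).2⟩ ⟨hmt.le, ht.2⟩ (hfg t ht))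

theorem peak_le_companion (hinc : StrictMonoOn f (Ioc a m)) (hdec : StrictAntiOn f (Ico m b))
    (hmaps : MapsTo g (Ioo a b) (Ioo a b)) (hfg : ∀ t ∈ Ioo a b, f (g t) = f t)
    (hne : ∀ t ∈ Ioo a b, t ≠ m → g t ≠ t) {t : α} (ht : t ∈ Ioo a b) (htm : t ≤ m) :
    m ≤ g t := by
  rcases htm.lt_or_eq with htm | rfl
  · exact (peak_lt_companion hinc hmaps hfg hne ht htm).le
  · exact (companion_peak_eq hinc hdec hmaps hfg ht).ge

theorem companion_le_peak (hinc : StrictMonoOn f (Ioc a m)) (hdec : StrictAntiOn f (Ico m b))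
    (hmaps : MapsTo g (Ioo a b) (Ioo a b)) (hfg : ∀ t ∈ Ioo a b, f (g t) = f t)
    (hne : ∀ t ∈ Ioo a b, t ≠ m → g t ≠ t) {t : α} (ht : t ∈ Ioo a b) (hmt : m ≤ t) :
    g t ≤ m := by
  rcases hmt.lt_or_eq with hmt | rfl
  · exact (companion_lt_peak hdec hmaps hfg hne ht hmt).le
  · exact (companion_peak_eq hinc hdec hmaps hfg ht).le

theorem companion_leftInvOn (hinc : StrictMonoOn f (Ioc a m)) (hdec : StrictAntiOn f (Ico m b))
    (hmaps : MapsTo g (Ioo a b) (Ioo a b)) (hfg : ∀ t ∈ Ioo a b, f (g t) = f t)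
    (hne : ∀ t ∈ Ioo a b, t ≠ m → g t ≠ t) : LeftInvOn g g (Ioo a b) := by
  intro t ht
  have hgt := hmaps ht
  have hfgg : f (g (g t)) = f t := (hfg _ hgt).trans (hfg t ht)
  rcases le_total t m with htm | hmt
  · have hggt := companion_le_peak hinc hdec hmaps hfg hne hgt
      (peak_le_companion hinc hdec hmaps hfg hne ht htm)
    exact hinc.injOn ⟨(hmaps hgt).1, hggt⟩ ⟨ht.1, htm⟩ hfgg
  · have hggt := peak_le_companion hinc hdec hmaps hfg hne hgt
      (companion_le_peak hinc hdec hmaps hfg hne ht hmt)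
    exact hdec.injOn ⟨hggt, (hmaps hgt).2⟩ ⟨hmt, ht.2⟩ hfgg

theorem companion_strictAntiOn (hinc : StrictMonoOn f (Ioc a m)) (hdec : StrictAntiOn f (Ico m b))
    (hmaps : MapsTo g (Ioo a b) (Ioo a b)) (hfg : ∀ t ∈ Ioo a b, f (g t) = f t)
    (hne : ∀ t ∈ Ioo a b, t ≠ m → g t ≠ t) : StrictAntiOn g (Ioo a b) := by
  intro s hs t ht hst
  rcases le_or_gt t m with htm | hmt
  · have hgs := peak_le_companion hinc hdec hmaps hfg hne hs (hst.le.trans htm)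
    have hgt := peak_le_companion hinc hdec hmaps hfg hne ht htm
    have hfst : f (g s) < f (g t) := by
      rw [hfg s hs, hfg t ht]
      exact hinc ⟨hs.1, hst.le.trans htm⟩ ⟨ht.1, htm⟩ hst
    exact (hdec.lt_iff_gt ⟨hgs, (hmaps hs).2⟩ ⟨hgt, (hmaps ht).2⟩).1 hfst
  rcases le_or_gt m s with hms | hsm
  · have hgs := companion_le_peak hinc hdec hmaps hfg hne hs hms
    have hgt := companion_le_peak hinc hdec hmaps hfg hne ht (hms.trans hst.le)
    have hfst : f (g t) < f (g s) := by
      rw [hfg s hs, hfg t ht]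
      exact hdec ⟨hms, hs.2⟩ ⟨hms.trans hst.le, ht.2⟩ hst
    exact (hinc.lt_iff_lt ⟨(hmaps ht).1, hgt⟩ ⟨(hmaps hs).1, hgs⟩).1 hfst
  · exact (companion_lt_peak hdec hmaps hfg hne ht hmt).trans
      (peak_lt_companion hinc hmaps hfg hne hs hsm)

end Companion

section EndpointLimits

variable {α : Type*} [TopologicalSpace α] [LinearOrder α] [OrderTopology α] [DenselyOrdered α]
  {g : α → α} {a b : α}

theorem StrictAntiOn.tendsto_nhdsGT_of_surjOn (hg : StrictAntiOn g (Ioo a b)) (hab : a < b)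
    (hmaps : MapsTo g (Ioo a b) (Ioo a b)) (hsurj : SurjOn g (Ioo a b) (Ioo a b)) :
    Tendsto g (𝓝[>] a) (𝓝 b) := by
  have hmem : ∀ᶠ t in 𝓝[>] a, t ∈ Ioo a b := Ioo_mem_nhdsGT hab
  refine tendsto_order.2 ⟨fun y hyb => ?_, fun y hby => ?_⟩
  · obtain ⟨c, hyc, hcb⟩ := exists_between (max_lt hyb hab)
    obtain ⟨s, hs, rfl⟩ := hsurj ⟨(le_max_right y a).trans_lt hyc, hcb⟩
    filter_upwards [Ioo_mem_nhdsGT hs.1] with t ht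
    exact (le_max_left y a).trans_lt (hyc.trans (hg ⟨ht.1, ht.2.trans hs.2⟩ hs ht.2))
  · filter_upwards [hmem] with t ht
    exact (hmaps ht).2.trans hby

theorem StrictAntiOn.tendsto_nhdsLT_of_surjOn (hg : StrictAntiOn g (Ioo a b)) (hab : a < b)
    (hmaps : MapsTo g (Ioo a b) (Ioo a b)) (hsurj : SurjOn g (Ioo a b) (Ioo a b)) :
    Tendsto g (𝓝[<] b) (𝓝 a) := by
  have hmem : ∀ᶠ t in 𝓝[<] b, t ∈ Ioo a b := Ioo_mem_nhdsLT hab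
  refine tendsto_order.2 ⟨fun y hya => ?_, fun y hay => ?_⟩
  · filter_upwards [hmem] with t ht
    exact hya.trans (hmaps ht).1
  · obtain ⟨c, hac, hcy⟩ := exists_between (lt_min hay hab)
    obtain ⟨s, hs, rfl⟩ := hsurj ⟨hac, hcy.trans_le (min_le_right y b)⟩
    filter_upwards [Ioo_mem_nhdsLT hs.2] with t ht
    exact (hg hs ⟨hs.1.trans ht.1, ht.2⟩ ht.1).trans (hcy.trans_le (min_le_left y b))

end EndpointLimits

section Profile

variable {p : ℝ}

theorem hasDerivAt_rpow_mul_one_sub_sq {t : ℝ} (ht : 0 < t) :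
    HasDerivAt (fun x : ℝ => x ^ (p - 2) * (1 - x ^ 2)) (t ^ (p - 3) * ((p - 2) - p * t ^ 2)) t := by
  have hpow : HasDerivAt (fun x : ℝ => x ^ (p - 2)) ((p - 2) * t ^ (p - 3)) t := by
    simpa [show p - 2 - 1 = p - 3 by ring] using Real.hasDerivAt_rpow_const (p := p - 2) (Or.inl ht.ne')
  have hsq : HasDerivAt (fun x : ℝ => 1 - x ^ 2) (-(2 * t)) t := by
    simpa using (hasDerivAt_pow 2 t).const_sub 1
  refine (hpow.mul hsq).congr_deriv ?_
  rw [show t ^ (p - 2) = t ^ (p - 3) * t by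
    rw [show p - 2 = p - 3 + 1 by ring, Real.rpow_add ht, Real.rpow_one]]
  ring

theorem continuousOn_rpow_mul_one_sub_sq {s : Set ℝ} (hs : ∀ t ∈ s, t ≠ 0 ∨ 2 ≤ p) :
    ContinuousOn (fun x : ℝ => x ^ (p - 2) * (1 - x ^ 2)) s := fun t ht =>
  ((Real.continuousAt_rpow_const t (p - 2) ((hs t ht).imp_right sub_nonneg.2)).mul
    (by fun_prop)).continuousWithinAt

theorem strictMonoOn_rpow_mul_one_sub_sq (hp : 0 < p) :
    StrictMonoOn (fun x : ℝ => x ^ (p - 2) * (1 - x ^ 2)) (Ioc 0 √((p - 2) / p)) := by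
  refine strictMonoOn_of_deriv_pos (convex_Ioc _ _)
    (continuousOn_rpow_mul_one_sub_sq fun t ht => Or.inl ht.1.ne') fun t ht => ?_
  rw [interior_Ioc] at ht
  rw [(hasDerivAt_rpow_mul_one_sub_sq ht.1).deriv]
  have hsq : t ^ 2 < (p - 2) / p := (Real.lt_sqrt ht.1.le).1 ht.2
  have : 0 < (p - 2) - p * t ^ 2 := by rw [lt_div_iff₀ hp] at hsq; linarith
  exact mul_pos (Real.rpow_pos_of_pos ht.1 _) this

theorem strictAntiOn_rpow_mul_one_sub_sq (hp : 2 ≤ p) :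
    StrictAntiOn (fun x : ℝ => x ^ (p - 2) * (1 - x ^ 2)) (Ico √((p - 2) / p) 1) := by
  refine strictAntiOn_of_deriv_neg (convex_Ico _ _)
    (continuousOn_rpow_mul_one_sub_sq fun _ _ => Or.inr hp) fun t ht => ?_
  rw [interior_Ico] at ht
  have ht0 : 0 < t := (Real.sqrt_nonneg _).trans_lt ht.1
  rw [(hasDerivAt_rpow_mul_one_sub_sq ht0).deriv]
  have hsq : (p - 2) / p < t ^ 2 := (Real.sqrt_lt' ht0).1 ht.1
  have : (p - 2) - p * t ^ 2 < 0 := by rw [div_lt_iff₀ (by linarith)] at hsq; linarith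
  exact mul_neg_of_pos_of_neg (Real.rpow_pos_of_pos ht0 _) this

theorem sqrt_sub_two_div_mem_Ioo (hp : 2 < p) : √((p - 2) / p) ∈ Ioo (0 : ℝ) 1 :=
  ⟨Real.sqrt_pos.2 (div_pos (by linarith) (by linarith)),
    (Real.sqrt_lt' one_pos).2 (by rw [one_pow, div_lt_one (by linarith)]; linarith)⟩

end Profile

theorem implicit_companion_strictAnti (p : ℝ) (hp : 2 < p) (g : ℝ → ℝ)
    (hmap : ∀ t ∈ Ioo (0 : ℝ) 1, g t ∈ Ioo (0 : ℝ) 1)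
    (heq : ∀ t ∈ Ioo (0 : ℝ) 1,
      g t ^ (p - 2) * (1 - g t ^ 2) = t ^ (p - 2) * (1 - t ^ 2))
    (hne : ∀ t ∈ Ioo (0 : ℝ) 1, t ≠ Real.sqrt ((p - 2) / p) → g t ≠ t) :
    StrictAntiOn g (Ioo 0 1) ∧
    Tendsto g (nhdsWithin 0 (Ioi 0)) (nhds 1) ∧
    Tendsto g (nhdsWithin 1 (Iio 1)) (nhds 0) := by
  have hinc := strictMonoOn_rpow_mul_one_sub_sq (p := p) (by linarith)
  have hdec := strictAntiOn_rpow_mul_one_sub_sq (p := p) hp.le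
  have hanti : StrictAntiOn g (Ioo 0 1) := companion_strictAntiOn hinc hdec hmap heq hne
  have hsurj : SurjOn g (Ioo 0 1) (Ioo 0 1) :=
    (companion_leftInvOn hinc hdec hmap heq hne).surjOn hmap
  exact ⟨hanti, hanti.tendsto_nhdsGT_of_surjOn one_pos hmap hsurj,
    hanti.tendsto_nhdsLT_of_surjOn one_pos hmap hsurj⟩
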